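/- Let α ∈ (1,2), h > 0, λ ≥ 0, and let γ₄ be real. Then the series of third-order tempered-WSGD weights ∑_{k=0}^{∞} g_{k,λ} converges, and its sum equals φ(λ) = (γ₁e^{hλ} + γ₂ + γ₃e^{−hλ} + γ₄e^{−2hλ})(1 − e^{−hλ})^α. -/

import Mathlib

/-!
With `z = e^{-hλ}` one has `e^{-(k-1)hλ} = e^{hλ} z^k`, so `∑ g_k` is `e^{hλ}` times a linear
combination of the delayed series `∑_k ω_{k-j} z^k = z^j (1 - z)^α`, `j = 0, …, 3`.
For `z < 1` the identity `∑ ω_k z^k = (1 - z)^α` is Newton's binomial series. At `z = 1`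
(`λ = 0`) the weights are summable, since `ω_k ≥ 0` for `k ≥ 2` while the partial sums
`∑_{i<n} ω_i = -n ω_n / α` are nonpositive, and Abel's limit theorem identifies their sum with
`lim_{z → 1⁻} (1 - z)^α = 0`.
-/

open Finset Filter Topology Nat

theorem Ring.choose_eq_prod_range_div {K : Type*} [Field K] [CharZero K] (a : K) (n : ℕ) :
    Ring.choose a n = (∏ i ∈ range n, (a - i)) / n ! := by
  rw [Ring.choose_eq_smul, ← Polynomial.aeval_eq_smeval, Polynomial.aeval_def,
    ← Polynomial.eval_map, descPochhammer_map, descPochhammer_eval_eq_prod_range, smul_eq_mul,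
    div_eq_inv_mul]

theorem Real.hasSum_choose_mul_pow (a : ℝ) {x : ℝ} (hx : |x| < 1) :
    HasSum (fun n => Ring.choose a n * x ^ n) ((1 + x) ^ a) := by
  have := (Real.one_add_rpow_hasFPowerSeriesOnBall_zero (a := a)).hasSum (y := x)
    (by simpa [enorm_eq_nnnorm, ← NNReal.coe_lt_coe] using hx)
  simpa [binomialSeries, mul_comm] using this

theorem HasSum.shift_mul_pow {a : ℕ → ℝ} {z s : ℝ} (h : HasSum (fun k => a k * z ^ k) s)
    (j : ℕ) : HasSum (fun k => (if j ≤ k then a (k - j) else 0) * z ^ k) (z ^ j * s) := by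
  rw [← (add_left_injective j).hasSum_iff]
  · refine (h.mul_left (z ^ j)).congr_fun fun k => ?_
    simp only [Function.comp_apply, le_add_iff_nonneg_left, Nat.zero_le, ↓reduceIte,
      Nat.add_sub_cancel, pow_add]
    ring
  · intro k hk
    have hkj : k < j := by
      by_contra! hjk
      exact hk ⟨k - j, Nat.sub_add_cancel hjk⟩
    simp [hkj]

noncomputable def grunwaldWeight (α : ℝ) (k : ℕ) : ℝ := (-1) ^ k * Ring.choose α k

section GrunwaldWeight

variable (α : ℝ)

theorem grunwaldWeight_eq_prod (k : ℕ) :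
    grunwaldWeight α k = (-1) ^ k * (∏ i ∈ range k, (α - i)) / k ! := by
  rw [grunwaldWeight, Ring.choose_eq_prod_range_div, mul_div_assoc]

@[simp] theorem grunwaldWeight_zero : grunwaldWeight α 0 = 1 := by simp [grunwaldWeight]

@[simp] theorem grunwaldWeight_one : grunwaldWeight α 1 = -α := by simp [grunwaldWeight]

theorem succ_mul_grunwaldWeight_succ (k : ℕ) :
    (k + 1) * grunwaldWeight α (k + 1) = (k - α) * grunwaldWeight α k := by
  rw [grunwaldWeight_eq_prod, grunwaldWeight_eq_prod, prod_range_succ, pow_succ, factorial_succ]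
  push_cast
  field_simp
  ring

theorem grunwaldWeight_nonneg (hα₁ : 1 ≤ α) (hα₂ : α ≤ 2) {k : ℕ} (hk : 2 ≤ k) :
    0 ≤ grunwaldWeight α k := by
  induction k, hk using Nat.le_induction with
  | base =>
    have h := succ_mul_grunwaldWeight_succ α 1
    norm_num at h
    nlinarith
  | succ k hk ih =>
    have hkα : 0 ≤ (k : ℝ) - α := by
      have : (2 : ℝ) ≤ k := by exact_mod_cast hk
      linarith
    have : 0 ≤ ((k : ℝ) + 1) * grunwaldWeight α (k + 1) :=
      succ_mul_grunwaldWeight_succ α k ▸ mul_nonneg hkα ih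
    exact nonneg_of_mul_nonneg_right (by rwa [mul_comm] at this) (by positivity)

theorem mul_sum_range_grunwaldWeight (n : ℕ) :
    α * ∑ i ∈ range n, grunwaldWeight α i = -(n * grunwaldWeight α n) := by
  induction n with
  | zero => simp
  | succ n ih =>
    rw [sum_range_succ, mul_add, ih]
    push_cast
    linarith [succ_mul_grunwaldWeight_succ α n]

theorem summable_grunwaldWeight (hα₁ : 1 ≤ α) (hα₂ : α ≤ 2) : Summable (grunwaldWeight α) := by
  rw [← summable_nat_add_iff 2]
  refine summable_of_sum_range_le (c := α - 1)
    (fun k => grunwaldWeight_nonneg α hα₁ hα₂ (by omega)) fun n => ?_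
  have hsum := mul_sum_range_grunwaldWeight α (n + 2)
  rw [sum_range_succ', sum_range_succ', grunwaldWeight_zero, grunwaldWeight_one] at hsum
  have := grunwaldWeight_nonneg α hα₁ hα₂ (k := n + 2) (by omega)
  nlinarith

theorem hasSum_grunwaldWeight_mul_pow {z : ℝ} (hz : |z| < 1) :
    HasSum (fun k => grunwaldWeight α k * z ^ k) ((1 - z) ^ α) := by
  have := Real.hasSum_choose_mul_pow α (x := -z) (by rwa [abs_neg])
  rw [← sub_eq_add_neg] at this
  refine this.congr_fun fun k => ?_
  rw [grunwaldWeight, neg_pow]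
  ring

theorem hasSum_grunwaldWeight (hα₁ : 1 ≤ α) (hα₂ : α ≤ 2) : HasSum (grunwaldWeight α) 0 := by
  obtain ⟨s, hs⟩ := summable_grunwaldWeight α hα₁ hα₂
  have habel := Real.tendsto_tsum_powerSeries_nhdsWithin_lt hs.tendsto_sum_nat
  have hpow : Tendsto (fun x : ℝ => (1 - x) ^ α) (𝓝[<] 1) (𝓝 0) := by
    have := ((continuous_const.sub continuous_id : Continuous fun x : ℝ => 1 - x).rpow_const
      (fun _ => Or.inr (by linarith : 0 ≤ α))).tendsto (1 : ℝ)
    simpa [Real.zero_rpow (by linarith : α ≠ 0)] using this.mono_left nhdsWithin_le_nhds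
  have heq : (fun x => ∑' k, grunwaldWeight α k * x ^ k) =ᶠ[𝓝[<] 1] fun x => (1 - x) ^ α := by
    filter_upwards [Ioo_mem_nhdsLT (show (-1 : ℝ) < 1 by norm_num)] with x hx
    exact (hasSum_grunwaldWeight_mul_pow α (abs_lt.2 hx)).tsum_eq
  rwa [tendsto_nhds_unique (habel.congr' heq) hpow] at hs

theorem hasSum_grunwaldWeight_mul_pow_of_le_one (hα₁ : 1 ≤ α) (hα₂ : α ≤ 2) {z : ℝ}
    (hz₁ : -1 < z) (hz₂ : z ≤ 1) :
    HasSum (fun k => grunwaldWeight α k * z ^ k) ((1 - z) ^ α) := by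
  rcases hz₂.lt_or_eq with hz₂ | rfl
  · exact hasSum_grunwaldWeight_mul_pow α (abs_lt.2 ⟨hz₁, hz₂⟩)
  · simpa [Real.zero_rpow (by linarith : α ≠ 0)] using hasSum_grunwaldWeight α hα₁ hα₂

end GrunwaldWeight

theorem tempered_WSGD_weights_hasSum_general
    (α lam h γ₁ γ₂ γ₃ γ₄ : ℝ) (hα1 : 1 < α) (hα2 : α < 2) (hlam : 0 ≤ lam) (hh : 0 < h)
    (ω : ℕ → ℝ)
    (hω : ∀ k : ℕ, ω k =
      (-1 : ℝ) ^ k * (∏ i ∈ Finset.range k, (α - (i : ℝ))) / (Nat.factorial k : ℝ))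
    (g : ℕ → ℝ)
    (hg0 : g 0 = γ₁ * ω 0 * Real.exp (h * lam))
    (hg1 : g 1 = γ₁ * ω 1 + γ₂ * ω 0)
    (hg2 : g 2 = (γ₁ * ω 2 + γ₂ * ω 1 + γ₃ * ω 0) * Real.exp (-(h * lam)))
    (hgk : ∀ k : ℕ, 3 ≤ k → g k =
      (γ₁ * ω k + γ₂ * ω (k - 1) + γ₃ * ω (k - 2) + γ₄ * ω (k - 3)) *
        Real.exp (-((k : ℝ) - 1) * h * lam)) :
    HasSum g
      ((γ₁ * Real.exp (h * lam) + γ₂ + γ₃ * Real.exp (-(h * lam)) +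
          γ₄ * Real.exp (-2 * (h * lam))) * (1 - Real.exp (-(h * lam))) ^ α) := by
  obtain rfl : ω = grunwaldWeight α :=
    funext fun k => (hω k).trans (grunwaldWeight_eq_prod α k).symm
  set e := Real.exp (h * lam)
  set z := Real.exp (-(h * lam))
  have hez : e * z = 1 := by rw [← Real.exp_add, add_neg_cancel, Real.exp_zero]
  have hexp : ∀ k : ℕ, Real.exp (-((k : ℝ) - 1) * h * lam) = e * z ^ k := by
    intro k
    rw [← Real.exp_nat_mul, ← Real.exp_add]
    ring_nf
  have hz2 : Real.exp (-2 * (h * lam)) = z ^ 2 := by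
    rw [← Real.exp_nat_mul]
    ring_nf
  set w := fun j k => (if j ≤ k then grunwaldWeight α (k - j) else 0) * z ^ k
  have hw : ∀ j, HasSum (w j) (z ^ j * (1 - z) ^ α) := fun j =>
    (hasSum_grunwaldWeight_mul_pow_of_le_one α hα1.le hα2.le
      (neg_one_lt_zero.trans (Real.exp_pos _))
      (Real.exp_le_one_iff.2 (neg_nonpos.2 (mul_nonneg hh.le hlam)))).shift_mul_pow j
  have hg : ∀ k, g k = e * (γ₁ * w 0 k + γ₂ * w 1 k + γ₃ * w 2 k + γ₄ * w 3 k) := by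
    intro k
    match k with
    | 0 => simp [w, hg0, mul_comm]
    | 1 =>
      simp only [w, hg1, grunwaldWeight_one, grunwaldWeight_zero, mul_neg, mul_one, neg_mul,
        ite_mul, zero_mul, zero_le, le_refl, ↓reduceIte, tsub_zero, tsub_self, pow_one, one_mul,
        not_ofNat_le_one, mul_zero, add_zero]
      linear_combination (γ₁ * α - γ₂) * hez
    | 2 =>
      simp only [w, hg2, grunwaldWeight_one, grunwaldWeight_zero, mul_neg, mul_one, neg_mul,
        ite_mul, zero_mul, zero_le, le_refl, ↓reduceIte, tsub_zero, tsub_self, one_le_ofNat,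
        Nat.add_one_sub_one, one_mul, reduceLeDiff, mul_zero, add_zero]
      linear_combination (γ₂ * α - γ₁ * grunwaldWeight α 2 - γ₃) * z * hez
    | k + 3 =>
      rw [hgk _ (by omega), hexp]
      simp only [w, Nat.add_one_sub_one, reduceSubDiff, add_tsub_cancel_right, ite_mul, zero_mul,
        le_add_iff_nonneg_left, zero_le, ↓reduceIte, tsub_zero]
      ring
  have hsum := ((((((hw 0).mul_left γ₁).add ((hw 1).mul_left γ₂)).add
    ((hw 2).mul_left γ₃)).add ((hw 3).mul_left γ₄)).mul_left e).congr_fun hg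
  rw [hz2]
  refine (congrArg (HasSum g) ?_).mp hsum
  linear_combination (γ₂ + γ₃ * z + γ₄ * z ^ 2) * (1 - z) ^ α * hez

/-- the series of third-order tempered-WSGD weights converges, with sum
`φ(λ) = (γ₁e^{hλ} + γ₂ + γ₃e^{−hλ} + γ₄e^{−2hλ})(1 − e^{−hλ})^α`. -/
theorem tempered_WSGD_weights_hasSum
    (α lam h γ₁ γ₂ γ₃ γ₄ : ℝ) (hα1 : 1 < α) (hα2 : α < 2) (hlam : 0 ≤ lam) (hh : 0 < h)
    (hγ₁ : γ₁ = α ^ 2 / 8 + 5 * α / 24 - γ₄)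
    (hγ₂ : γ₂ = -α ^ 2 / 4 + α / 12 + 1 + 3 * γ₄)
    (hγ₃ : γ₃ = α ^ 2 / 8 - 7 * α / 24 - 3 * γ₄)
    (ω : ℕ → ℝ)
    (hω : ∀ k : ℕ, ω k =
      (-1 : ℝ) ^ k * (∏ i ∈ Finset.range k, (α - (i : ℝ))) / (Nat.factorial k : ℝ))
    (g : ℕ → ℝ)
    (hg0 : g 0 = γ₁ * ω 0 * Real.exp (h * lam))
    (hg1 : g 1 = γ₁ * ω 1 + γ₂ * ω 0)
    (hg2 : g 2 = (γ₁ * ω 2 + γ₂ * ω 1 + γ₃ * ω 0) * Real.exp (-(h * lam)))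
    (hgk : ∀ k : ℕ, 3 ≤ k → g k =
      (γ₁ * ω k + γ₂ * ω (k - 1) + γ₃ * ω (k - 2) + γ₄ * ω (k - 3)) *
        Real.exp (-((k : ℝ) - 1) * h * lam)) :
    HasSum g
      ((γ₁ * Real.exp (h * lam) + γ₂ + γ₃ * Real.exp (-(h * lam)) +
          γ₄ * Real.exp (-2 * (h * lam))) * (1 - Real.exp (-(h * lam))) ^ α) :=
  tempered_WSGD_weights_hasSum_general α lam h γ₁ γ₂ γ₃ γ₄ hα1 hα2 hlam hh ω hω g hg0 hg1 hg2 hgk
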